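/- arXiv:2006.14434 — 2 statements merged into one kernel-verified Lean document; each statement's English description precedes it below -/
import Mathlib

section
/- Let k be a field, n ≤ m, and R = k[x_{ij} : 1 ≤ i ≤ n, 1 ≤ j ≤ m]. For an increasing sequence a = (a_1 < ... < a_n) in [m], let LT[a] = x_{1 a_1} x_{2 a_2} ··· x_{n a_n} be the leading (diagonal) term of the maximal minor on columns a. Suppose a = {f_1,...,f̂_i,...,f_{n+1}} and b = {f_1,...,f_i,f̂_{i+1},...,f_{n+1}} are the two subsets of a set f = {f_1 < ... < f_{n+1}} obtained by deleting f_i and f_{i+1} respectively. Then lcm(LT[a], LT[b]) = x_{1 f_1} ··· x_{i-1 f_{i-1}} · x_{i f_i} · x_{i f_{i+1}} · x_{i+1 f_{i+2}} ··· x_{n f_{n+1}}, and the only increasing n-sequences c in [m] with LT[c] dividing this lcm are c = a and c = b. -/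
/-!
The exponent vector of `LT[c]` is the indicator of the cells `(k, c_k)`, `1 ≤ k ≤ n`.
The cells of `LT[a]` and `LT[b]` agree outside row `i`, where `a` has `f_{i+1}` and `b` has
`f_i`; so their union is the set of cells `(row k, f_k)`, `1 ≤ k ≤ n + 1`, in which `f_i` and
`f_{i+1}` both lie in row `i`. As `f` is injective these cells are distinct, so the lcm is the
claimed squarefree monomial. A sequence `c` whose cells all lie in this set agrees with `a`
and `b` outside row `i` and has `c_i ∈ {f_i, f_{i+1}}`, hence `c = b` or `c = a`.
-/

/-- The exponent vector of the diagonal leading term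
`LT[c] = x_{1 c_1} x_{2 c_2} ⋯ x_{n c_n}` of the maximal minor on columns
`c = (c_1 < ⋯ < c_n)` (1-indexed): the exponent of the variable `x_p`. -/
def LTexp (n : ℕ) (c : ℕ → ℕ) : ℕ × ℕ → ℕ :=
  fun p => ((Finset.Icc 1 n).filter (fun i => p = (i, c i))).card

open Finset

theorem card_filter_eq_apply_le_one {α β : Type*} [DecidableEq β] {s : Finset α} {g : α → β}
    (hg : Set.InjOn g s) (p : β) : #{k ∈ s | p = g k} ≤ 1 := by
  refine card_le_one.mpr fun x hx y hy => ?_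
  rw [mem_filter] at hx hy
  exact hg hx.1 hy.1 (hx.2.symm.trans hy.2)

theorem LTexp_le_one (n : ℕ) (c : ℕ → ℕ) (p : ℕ × ℕ) : LTexp n c p ≤ 1 :=
  card_filter_eq_apply_le_one (fun _ _ _ _ h => (Prod.mk.inj h).1) p

theorem LTexp_pos_iff {n : ℕ} {c : ℕ → ℕ} {p : ℕ × ℕ} :
    0 < LTexp n c p ↔ ∃ k ∈ Icc 1 n, p = (k, c k) := by
  simp only [LTexp, card_pos, filter_nonempty_iff]

/-- The row of `x_{·, f_k}` in `lcm(LT[a], LT[b])`: `f_i` and `f_{i+1}` share row `i`. -/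
def lcmRow (i k : ℕ) : ℕ := if k ≤ i then k else k - 1

section ConsecutiveDeletions

variable {n i : ℕ} {f a b : ℕ → ℕ}

theorem lcmRow_of_lt {j : ℕ} : lcmRow i (if j < i then j else j + 1) = j := by
  unfold lcmRow; split_ifs <;> omega

theorem lcmRow_of_le {j : ℕ} : lcmRow i (if j ≤ i then j else j + 1) = j := by
  unfold lcmRow; split_ifs <;> omega

theorem lcmRow_mem_Icc (hi1 : 1 ≤ i) (hi2 : i ≤ n) {k : ℕ} (hk : k ∈ Icc 1 (n + 1)) :
    lcmRow i k ∈ Icc 1 n := by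
  rw [mem_Icc] at hk ⊢; unfold lcmRow; split_ifs <;> omega

theorem apply_lcmRow_of_ne (ha : ∀ k, a k = if k < i then f k else f (k + 1)) {k : ℕ}
    (hk : k ≠ i) : a (lcmRow i k) = f k := by
  rw [ha, lcmRow]; split_ifs <;> first | rfl | omega | congr 1; omega

theorem apply_lcmRow_of_ne_succ (hb : ∀ k, b k = if k ≤ i then f k else f (k + 1)) {k : ℕ}
    (hk : k ≠ i + 1) : b (lcmRow i k) = f k := by
  rw [hb, lcmRow]; split_ifs <;> first | rfl | omega | congr 1; omega

variable (ha : ∀ k, a k = if k < i then f k else f (k + 1))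
  (hb : ∀ k, b k = if k ≤ i then f k else f (k + 1))
include ha hb

theorem exists_cell_iff (hi1 : 1 ≤ i) (hi2 : i ≤ n) {p : ℕ × ℕ} :
    ((∃ j ∈ Icc 1 n, p = (j, a j)) ∨ ∃ j ∈ Icc 1 n, p = (j, b j)) ↔
      ∃ k ∈ Icc 1 (n + 1), p = (lcmRow i k, f k) := by
  constructor
  · rintro (⟨j, hj, rfl⟩ | ⟨j, hj, rfl⟩)
    · refine ⟨if j < i then j else j + 1, ?_, by rw [lcmRow_of_lt, ha, apply_ite f]⟩
      rw [mem_Icc] at hj ⊢; split_ifs <;> omega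
    · refine ⟨if j ≤ i then j else j + 1, ?_, by rw [lcmRow_of_le, hb, apply_ite f]⟩
      rw [mem_Icc] at hj ⊢; split_ifs <;> omega
  · rintro ⟨k, hk, rfl⟩
    have hrow := lcmRow_mem_Icc hi1 hi2 hk
    rcases eq_or_ne k i with rfl | hki
    · exact .inr ⟨_, hrow, by rw [apply_lcmRow_of_ne_succ hb (by omega)]⟩
    · exact .inl ⟨_, hrow, by rw [apply_lcmRow_of_ne ha hki]⟩

theorem max_LTexp_eq (hi1 : 1 ≤ i) (hi2 : i ≤ n) (hf : Set.InjOn f (Icc 1 (n + 1)))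
    (p : ℕ × ℕ) :
    max (LTexp n a p) (LTexp n b p) = #{k ∈ Icc 1 (n + 1) | p = (lcmRow i k, f k)} := by
  have hle : #{k ∈ Icc 1 (n + 1) | p = (lcmRow i k, f k)} ≤ 1 :=
    card_filter_eq_apply_le_one (fun _ hx _ hy h => hf hx hy (Prod.mk.inj h).2) p
  have hpos : 0 < LTexp n a p ∨ 0 < LTexp n b p ↔
      0 < #{k ∈ Icc 1 (n + 1) | p = (lcmRow i k, f k)} := by
    simp only [LTexp_pos_iff, card_pos, filter_nonempty_iff]
    exact exists_cell_iff ha hb hi1 hi2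
  have := LTexp_le_one n a p
  have := LTexp_le_one n b p
  omega

theorem forall_eq_or_forall_eq_of_cells (hi1 : 1 ≤ i) (hi2 : i ≤ n) {c : ℕ → ℕ}
    (hc : ∀ k ∈ Icc 1 n, ∃ k', lcmRow i k' = k ∧ c k = f k') :
    (∀ k, 1 ≤ k → k ≤ n → c k = a k) ∨ (∀ k, 1 ≤ k → k ≤ n → c k = b k) := by
  have off_row : ∀ k, 1 ≤ k → k ≤ n → k ≠ i → c k = a k ∧ c k = b k := by
    intro k hk1 hk2 hki
    obtain ⟨k', rfl, hck⟩ := hc k (mem_Icc.2 ⟨hk1, hk2⟩)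
    have hk' : k' ≠ i ∧ k' ≠ i + 1 := by
      constructor <;> rintro rfl <;> simp [lcmRow] at hki
    rw [hck, apply_lcmRow_of_ne ha hk'.1, apply_lcmRow_of_ne_succ hb hk'.2]
    exact ⟨rfl, rfl⟩
  have on_row : c i = a i ∨ c i = b i := by
    obtain ⟨k', hk', hck⟩ := hc i (mem_Icc.2 ⟨hi1, hi2⟩)
    rcases eq_or_ne k' i with rfl | hki
    · exact .inr (by rw [hck, ← apply_lcmRow_of_ne_succ hb (by omega), hk'])
    · exact .inl (by rw [hck, ← apply_lcmRow_of_ne ha hki, hk'])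
  rcases on_row with h | h
  · refine .inl fun k hk1 hk2 => ?_
    rcases eq_or_ne k i with rfl | hki
    exacts [h, (off_row k hk1 hk2 hki).1]
  · refine .inr fun k hk1 hk2 => ?_
    rcases eq_or_ne k i with rfl | hki
    exacts [h, (off_row k hk1 hk2 hki).2]

end ConsecutiveDeletions

theorem lcm_of_consecutive_deletions_general (n m : ℕ)
    (f : ℕ → ℕ)
    (hf : ∀ j k : ℕ, 1 ≤ j → j < k → k ≤ n + 1 → f j < f k)
    (i : ℕ) (hi1 : 1 ≤ i) (hi2 : i ≤ n)
    (a b : ℕ → ℕ)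
    (ha : ∀ k, a k = if k < i then f k else f (k + 1))
    (hb : ∀ k, b k = if k ≤ i then f k else f (k + 1)) :
    (∀ p : ℕ × ℕ, max (LTexp n a p) (LTexp n b p) =
      ((Finset.Icc 1 (n + 1)).filter
        (fun k => p = ((if k ≤ i then k else k - 1), f k))).card) ∧
    (∀ c : ℕ → ℕ,
      (∀ j k : ℕ, 1 ≤ j → j < k → k ≤ n → c j < c k) →
      (∀ k : ℕ, 1 ≤ k → k ≤ n → c k ∈ Finset.Icc 1 m) →
      (∀ p : ℕ × ℕ, LTexp n c p ≤ max (LTexp n a p) (LTexp n b p)) →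
      (∀ k : ℕ, 1 ≤ k → k ≤ n → c k = a k) ∨
        (∀ k : ℕ, 1 ≤ k → k ≤ n → c k = b k)) := by
  have hinj : Set.InjOn f (Icc 1 (n + 1)) := StrictMonoOn.injOn fun j hj k hk hjk =>
    hf j k (mem_Icc.1 hj).1 hjk (mem_Icc.1 hk).2
  have hmax := max_LTexp_eq ha hb hi1 hi2 hinj
  refine ⟨hmax, fun c _ _ hdiv => forall_eq_or_forall_eq_of_cells ha hb hi1 hi2 fun k hk => ?_⟩
  have hcell : 0 < #{k' ∈ Icc 1 (n + 1) | (k, c k) = (lcmRow i k', f k')} :=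
    (LTexp_pos_iff.2 ⟨k, hk, rfl⟩).trans_le ((hdiv _).trans (hmax _).le)
  obtain ⟨k', -, hk'⟩ := filter_nonempty_iff.1 (card_pos.1 hcell)
  exact ⟨k', (Prod.mk.inj hk').1.symm, (Prod.mk.inj hk').2⟩

/-- Let `f = (f_1 < ⋯ < f_{n+1})` in `[m]`, and let `a`, `b` be obtained from
`f` by deleting `f_i`, `f_{i+1}` respectively.  Then (divisibility and lcm of
monomials being read off exponent vectors)
`lcm(LT[a], LT[b]) = x_{1 f_1} ⋯ x_{i-1 f_{i-1}} x_{i f_i} x_{i f_{i+1}} x_{i+1 f_{i+2}} ⋯ x_{n f_{n+1}}`,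
and the only increasing `n`-sequences `c` in `[m]` with `LT[c]` dividing this
lcm are `c = a` and `c = b`. -/
theorem lcm_of_consecutive_deletions (n m : ℕ) (hn : 1 ≤ n) (hnm : n ≤ m)
    (f : ℕ → ℕ)
    (hf : ∀ j k : ℕ, 1 ≤ j → j < k → k ≤ n + 1 → f j < f k)
    (hfr : ∀ k : ℕ, 1 ≤ k → k ≤ n + 1 → f k ∈ Finset.Icc 1 m)
    (i : ℕ) (hi1 : 1 ≤ i) (hi2 : i ≤ n)
    (a b : ℕ → ℕ)
    (ha : ∀ k, a k = if k < i then f k else f (k + 1))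
    (hb : ∀ k, b k = if k ≤ i then f k else f (k + 1)) :
    (∀ p : ℕ × ℕ, max (LTexp n a p) (LTexp n b p) =
      ((Finset.Icc 1 (n + 1)).filter
        (fun k => p = ((if k ≤ i then k else k - 1), f k))).card) ∧
    (∀ c : ℕ → ℕ,
      (∀ j k : ℕ, 1 ≤ j → j < k → k ≤ n → c j < c k) →
      (∀ k : ℕ, 1 ≤ k → k ≤ n → c k ∈ Finset.Icc 1 m) →
      (∀ p : ℕ × ℕ, LTexp n c p ≤ max (LTexp n a p) (LTexp n b p)) →
      (∀ k : ℕ, 1 ≤ k → k ≤ n → c k = a k) ∨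
        (∀ k : ℕ, 1 ≤ k → k ≤ n → c k = b k)) :=
  lcm_of_consecutive_deletions_general n m f hf i hi1 hi2 a b ha hb
end

section
/- Let f = {f_1 < ... < f_{n+1}} ⊆ [m], and for 1 ≤ k ≤ n+1 let a^{(k)} denote the increasing n-tuple obtained from f by deleting f_k. For any fixed index s with 1 ≤ s ≤ n, consider elements z = Σ_{k=1}^{n+1} λ_k x_{s f_k} e_{a^{(k)}} (λ_k scalars in a field k) in the free module with basis {e_a : a an n-subset of [m]}, mapped by d(e_a) = x_{1 a_1} x_{2 a_2} ··· x_{n a_n} into the polynomial ring k[x_{ij} : 1 ≤ i ≤ n, 1 ≤ j ≤ m]. Then z is in the kernel of d if and only if λ_k = 0 for all k ∉ {s, s+1} and λ_s x_{s f_s} · LT[a^{(s)}] + λ_{s+1} x_{s f_{s+1}} · LT[a^{(s+1)}] = 0, i.e., λ_{s+1} = -λ_s; equivalently, the kernel in this multidegree is spanned by x_{s f_s} e_{a^{(s)}} - x_{s f_{s+1}} e_{a^{(s+1)}}. -/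
/-!
Each summand `λ_k x_{s f_k} LT[a⁽ᵏ⁾]` is a single monomial. The monomials for `k = s` and
`k = s + 1` coincide, and all others are pairwise distinct: for `j < k` outside that pair
there is a row `i ≠ s` with `j ≤ i < k`, in which `x_{s f_j} LT[a⁽ʲ⁾]` uses the column
`f_{i+1}` and `x_{s f_k} LT[a⁽ᵏ⁾]` the column `f_i`. A sum of monomials vanishes iff the
coefficients over each set of equal exponents add up to zero, which gives the claim.
-/

open MvPolynomial

/-- The diagonal leading term `LT[c] = x_{1 c_1} x_{2 c_2} ⋯ x_{n c_n}` of the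
maximal minor on columns `c = (c_1 < ⋯ < c_n)` (1-indexed), as a polynomial in
`K[x_{ij}]`. -/
noncomputable def LTpoly (K : Type*) [Field K] (n : ℕ) (c : ℕ → ℕ) :
    MvPolynomial (ℕ × ℕ) K :=
  ∏ k ∈ Finset.Icc 1 n, X (k, c k)

/-- `delAt f k` is the increasing `n`-tuple obtained from the `(n+1)`-tuple `f`
by deleting its `k`-th entry (1-indexed). -/
def delAt (f : ℕ → ℕ) (k : ℕ) : ℕ → ℕ := fun j => if j < k then f j else f (j + 1)

namespace MvPolynomial

theorem sum_monomial_eq_zero_iff {σ R ι : Type*} [CommSemiring R] [DecidableEq σ]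
    (t : Finset ι) (e : ι → σ →₀ ℕ) (c : ι → R) :
    ∑ k ∈ t, monomial (e k) (c k) = 0 ↔ ∀ k ∈ t, ∑ j ∈ t with e j = e k, c j = 0 := by
  have hcoeff : ∀ d, coeff d (∑ k ∈ t, monomial (e k) (c k)) = ∑ j ∈ t with e j = d, c j := by
    intro d
    simp only [coeff_sum, coeff_monomial, Finset.sum_filter]
  constructor
  · intro h k _
    rw [← hcoeff, h, coeff_zero]
  · intro h
    ext d
    rw [hcoeff, coeff_zero]
    by_cases hd : ∃ k ∈ t, e k = d
    · obtain ⟨k, hk, rfl⟩ := hd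
      exact h k hk
    · exact Finset.sum_eq_zero fun j hj => (hd ⟨j, Finset.mem_filter.mp hj⟩).elim

end MvPolynomial

theorem delAt_of_lt {f : ℕ → ℕ} {k i : ℕ} (h : i < k) : delAt f k i = f i := if_pos h

theorem delAt_of_le {f : ℕ → ℕ} {k i : ℕ} (h : k ≤ i) : delAt f k i = f (i + 1) :=
  if_neg (Nat.not_lt.mpr h)

noncomputable def termExponent (f : ℕ → ℕ) (n s k : ℕ) : (ℕ × ℕ) →₀ ℕ :=
  Finsupp.single (s, f k) 1 + ∑ i ∈ Finset.Icc 1 n, Finsupp.single (i, delAt f k i) 1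

theorem C_mul_X_mul_LTpoly_delAt (K : Type*) [Field K] (n s : ℕ) (f : ℕ → ℕ) (a : K) (k : ℕ) :
    C a * X ((s, f k) : ℕ × ℕ) * LTpoly K n (delAt f k) = monomial (termExponent f n s k) a := by
  simp only [LTpoly, termExponent, X, C_apply, ← monomial_sum_one, monomial_mul, mul_one, zero_add]

section termExponent

variable {f : ℕ → ℕ} {n s : ℕ}

theorem termExponent_apply_of_ne {k i : ℕ} (hi : i ∈ Finset.Icc 1 n) (his : i ≠ s) (c : ℕ) :
    termExponent f n s k (i, c) = if delAt f k i = c then 1 else 0 := by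
  rw [termExponent, Finsupp.add_apply, Finsupp.finsetSum_apply,
    Finsupp.single_eq_of_ne (by simp [his]), zero_add,
    Finset.sum_eq_single_of_mem i hi fun b _ hb => Finsupp.single_eq_of_ne (by simp [hb.symm])]
  simp [Finsupp.single_apply]

theorem termExponent_self_eq_succ (hs : s ∈ Finset.Icc 1 n) :
    termExponent f n s s = termExponent f n s (s + 1) := by
  have hrows : ∀ i ∈ (Finset.Icc 1 n).erase s, delAt f s i = delAt f (s + 1) i := by
    intro i hi
    rcases lt_or_gt_of_ne (Finset.ne_of_mem_erase hi) with h | h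
    · rw [delAt_of_lt h, delAt_of_lt (by omega)]
    · rw [delAt_of_le h.le, delAt_of_le h]
  rw [termExponent, termExponent, ← Finset.add_sum_erase _ _ hs, ← Finset.add_sum_erase _ _ hs,
    Finset.sum_congr rfl fun i hi => by rw [hrows i hi], delAt_of_le le_rfl,
    delAt_of_lt (Nat.lt_succ_self s)]
  abel

theorem termExponent_ne_of_lt (hf : ∀ i ∈ Finset.Icc 1 n, f i ≠ f (i + 1)) {j k : ℕ}
    (hj : 1 ≤ j) (hk : k ≤ n + 1) (hjk : j < k) (hpair : ¬(j = s ∧ k = s + 1)) :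
    termExponent f n s j ≠ termExponent f n s k := by
  obtain ⟨i, hji, hik, his, hi1⟩ : ∃ i, j ≤ i ∧ i < k ∧ i ≠ s ∧ 1 ≤ i := by
    by_cases h : j = s
    · exact ⟨s + 1, by omega, by omega, by omega, by omega⟩
    · exact ⟨j, le_rfl, hjk, h, hj⟩
  have hi : i ∈ Finset.Icc 1 n := Finset.mem_Icc.mpr ⟨hi1, by omega⟩
  intro h
  have := congrArg (· (i, f (i + 1))) h
  simp only [termExponent_apply_of_ne hi his, delAt_of_le hji, delAt_of_lt hik,
    if_neg (hf i hi)] at this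
  exact one_ne_zero this

theorem termExponent_eq_iff (hf : ∀ i ∈ Finset.Icc 1 n, f i ≠ f (i + 1))
    (hs : s ∈ Finset.Icc 1 n) {j k : ℕ}
    (hj : j ∈ Finset.Icc 1 (n + 1)) (hk : k ∈ Finset.Icc 1 (n + 1)) :
    termExponent f n s j = termExponent f n s k ↔
      j = k ∨ (j = s ∧ k = s + 1) ∨ (j = s + 1 ∧ k = s) := by
  rw [Finset.mem_Icc] at hj hk
  constructor
  · intro h
    by_contra! hc
    rcases lt_trichotomy j k with hlt | heq | hgt
    · exact termExponent_ne_of_lt hf hj.1 hk.2 hlt (fun h' => hc.2.1 h'.1 h'.2) h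
    · exact hc.1 heq
    · exact termExponent_ne_of_lt hf hk.1 hj.2 hgt (fun h' => hc.2.2 h'.2 h'.1) h.symm
  · rintro (rfl | ⟨rfl, rfl⟩ | ⟨rfl, rfl⟩)
    · rfl
    · exact termExponent_self_eq_succ hs
    · exact (termExponent_self_eq_succ hs).symm

theorem filter_termExponent_eq (hf : ∀ i ∈ Finset.Icc 1 n, f i ≠ f (i + 1))
    (hs : s ∈ Finset.Icc 1 n) {k : ℕ} (hk : k ∈ Finset.Icc 1 (n + 1)) :
    {j ∈ Finset.Icc 1 (n + 1) | termExponent f n s j = termExponent f n s k} =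
      if k = s ∨ k = s + 1 then {s, s + 1} else {k} := by
  ext j
  have hs' := Finset.mem_Icc.mp hs
  by_cases hj : j ∈ Finset.Icc 1 (n + 1)
  · rw [Finset.mem_filter, termExponent_eq_iff hf hs hj hk]
    split_ifs <;> simp only [Finset.mem_Icc, Finset.mem_insert, Finset.mem_singleton] at * <;> omega
  · have hj' : j ∉ (if k = s ∨ k = s + 1 then {s, s + 1} else {k} : Finset ℕ) := by
      split_ifs <;> simp only [Finset.mem_Icc, Finset.mem_insert, Finset.mem_singleton] at * <;> omega
    simp only [Finset.mem_filter, hj, hj', false_and]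

end termExponent

theorem syzygy_in_multidegree_general (K : Type*) [Field K] (n : ℕ)
    (f : ℕ → ℕ)
    (hf : ∀ j k : ℕ, 1 ≤ j → j < k → k ≤ n + 1 → f j < f k)
    (s : ℕ) (hs1 : 1 ≤ s) (hs2 : s ≤ n) (lam : ℕ → K) :
    (∑ k ∈ Finset.Icc 1 (n + 1),
        C (lam k) * X ((s, f k) : ℕ × ℕ) * LTpoly K n (delAt f k)) = 0 ↔
      (∀ k ∈ Finset.Icc 1 (n + 1), k ≠ s → k ≠ s + 1 → lam k = 0) ∧
        lam (s + 1) = - lam s := by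
  have hs : s ∈ Finset.Icc 1 n := Finset.mem_Icc.mpr ⟨hs1, hs2⟩
  have hf' : ∀ i ∈ Finset.Icc 1 n, f i ≠ f (i + 1) := fun i hi =>
    (hf i (i + 1) (Finset.mem_Icc.mp hi).1 i.lt_succ_self (by simp at hi; omega)).ne
  have hsmem : s ∈ Finset.Icc 1 (n + 1) := by simp; omega
  simp only [C_mul_X_mul_LTpoly_delAt, sum_monomial_eq_zero_iff]
  constructor
  · intro h
    refine ⟨fun k hk hks hks1 => ?_, ?_⟩
    · simpa [filter_termExponent_eq hf' hs hk, hks, hks1] using h k hk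
    · have hpair := h s hsmem
      rw [filter_termExponent_eq hf' hs hsmem, if_pos (Or.inl rfl),
        Finset.sum_pair (Nat.succ_ne_self s).symm] at hpair
      linear_combination hpair
  · rintro ⟨h0, h1⟩ k hk
    rw [filter_termExponent_eq hf' hs hk]
    split_ifs with hks
    · rw [Finset.sum_pair (Nat.succ_ne_self s).symm, h1, add_neg_cancel]
    · push Not at hks
      rw [Finset.sum_singleton, h0 k hk hks.1 hks.2]

/-- For `f = (f_1 < ⋯ < f_{n+1}) ⊆ [m]`, `a⁽ᵏ⁾ = delAt f k`, a fixed row index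
`1 ≤ s ≤ n`, and scalars `λ_k`, the element `z = Σ_k λ_k x_{s f_k} e_{a⁽ᵏ⁾}` is
in the kernel of the map `e_a ↦ LT[a]` if and only if `λ_k = 0` for all
`k ∉ {s, s+1}` and `λ_{s+1} = -λ_s`. -/
theorem syzygy_in_multidegree (K : Type*) [Field K] (n m : ℕ) (hn : 1 ≤ n)
    (f : ℕ → ℕ)
    (hf : ∀ j k : ℕ, 1 ≤ j → j < k → k ≤ n + 1 → f j < f k)
    (hfr : ∀ k : ℕ, 1 ≤ k → k ≤ n + 1 → f k ∈ Finset.Icc 1 m)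
    (s : ℕ) (hs1 : 1 ≤ s) (hs2 : s ≤ n) (lam : ℕ → K) :
    (∑ k ∈ Finset.Icc 1 (n + 1),
        C (lam k) * X ((s, f k) : ℕ × ℕ) * LTpoly K n (delAt f k)) = 0 ↔
      (∀ k ∈ Finset.Icc 1 (n + 1), k ≠ s → k ≠ s + 1 → lam k = 0) ∧
        lam (s + 1) = - lam s :=
  syzygy_in_multidegree_general K n f hf s hs1 hs2 lam
end
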